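/- For any trace t and any completion of t, the operation order of the completion is contained in that of t: for all t⁺ ∈ ext(t), ⪯_{comp(t⁺)} ⊆ ⪯_t. -/

import Mathlib

inductive Event (T PS Op Val : Type) : Type
  | step : T → PS → Event T PS Op Val
  | effS : T → PS → Event T PS Op Val
  | inv  : Op → Val → Event T PS Op Val
  | res  : Op → Val → Event T PS Op Val
  | effO : Op → Val → Event T PS Op Val

namespace Event

variable {T PS Op Val : Type}

/-- `precedes t a b`: `a` occurs at an earlier index than `b` in the trace `t`. -/
def precedes (t : List (Event T PS Op Val)) (a b : Event T PS Op Val) : Prop :=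
  ∃ i j, i < j ∧ t[(i : ℕ)]? = some a ∧ t[(j : ℕ)]? = some b

/-- Program events: program steps and their effects. -/
def IsProgEvent : Event T PS Op Val → Prop
  | step _ _ => True
  | effS _ _ => True
  | _ => False

/-- Invocation or response event. -/
def isIR : Event T PS Op Val → Bool
  | inv _ _ => true
  | res _ _ => true
  | _ => false

/-- Restriction of a trace to its invocation and response events. -/
def restrictIR (t : List (Event T PS Op Val)) : List (Event T PS Op Val) := t.filter isIR

/-- Well-formedness of traces: invocations precede matching responses and effects,
program steps precede their effects, and response/effect outputs agree. -/
def WellFormed (t : List (Event T PS Op Val)) : Prop :=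
  (∀ j a out, (t[(j : ℕ)]? = some (res a out) ∨ t[(j : ℕ)]? = some (effO a out)) →
      ∃ i inp, i < j ∧ t[(i : ℕ)]? = some (inv a inp)) ∧
  (∀ j τ p, t[(j : ℕ)]? = some (effS τ p) → ∃ i, i < j ∧ t[(i : ℕ)]? = some (step τ p)) ∧
  (∀ a outr oute, res a outr ∈ t → effO a oute ∈ t → outr = oute)

/-- `ext t`: the extensions of trace `t` by a sequence of response events. -/
def ext (t : List (Event T PS Op Val)) : Set (List (Event T PS Op Val)) :=
  {u | ∃ tr, u = t ++ tr ∧ (∀ e ∈ tr, ∃ c v, e = res c v) ∧ u.Nodup}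

open Classical in
/-- `comp t` removes from `t` every invocation with neither a later response
nor a later operation effect. -/
noncomputable def comp : List (Event T PS Op Val) → List (Event T PS Op Val)
  | [] => []
  | e :: rest =>
    if ∃ a inp, e = inv a inp ∧ ∀ out, res a out ∉ rest ∧ effO a out ∉ rest
    then comp rest
    else e :: comp rest

/-- `Allows R t` : the (partial) order `R` allows the trace `t`. -/
def Allows (R : Event T PS Op Val → Event T PS Op Val → Prop)
    (t : List (Event T PS Op Val)) : Prop :=
  ∀ a b, R a b → b ∈ t → precedes t a b

/-- The operation order `⪯_t`: pairs `(res c, inv d)` with the response before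
the invocation in `t`. -/
def OpOrd (t : List (Event T PS Op Val)) (e e' : Event T PS Op Val) : Prop :=
  (∃ c v, e = res c v) ∧ (∃ d w, e' = inv d w) ∧ precedes t e e'

/-- Atomic history: every invocation is immediately followed by its response and
every response immediately preceded by its invocation. -/
def Atomic (h : List (Event T PS Op Val)) : Prop :=
  (∀ i a inp, h[(i : ℕ)]? = some (inv a inp) → ∃ out, h[i + 1]? = some (res a out)) ∧
  (∀ i a out, h[(i : ℕ)]? = some (res a out) → ∃ j inp, i = j + 1 ∧ h[(j : ℕ)]? = some (inv a inp))

/-- The thread of an object event (invocation or response), if any. -/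
def objThread (thread : Op → T) : Event T PS Op Val → Option T
  | inv o _ => some (thread o)
  | res o _ => some (thread o)
  | _ => none

/-- Thread equivalence: equal per-thread subsequences of invocations and responses. -/
def threadEquiv [DecidableEq T] (thread : Op → T) (t h : List (Event T PS Op Val)) : Prop :=
  ∀ τ : T, t.filter (fun e => decide (objThread thread e = some τ)) =
           h.filter (fun e => decide (objThread thread e = some τ))

open Classical in
/-- The transformation function `trans` of the soundness proof (cases (T1)–(T5)). -/
noncomputable def trans : List (Event T PS Op Val) → List (Event T PS Op Val) →
    List (Event T PS Op Val) → List (Event T PS Op Val)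
  | t, h', r =>
    if h5 : ∃ a inp out, h'.head? = some (inv a inp) ∧ inv a inp ∈ r ∧ res a out ∈ t then
      -- (T5)
      let a := h5.choose
      let inp := h5.choose_spec.choose
      let out := h5.choose_spec.choose_spec.choose
      inv a inp :: effO a out :: res a out ::
        trans t h'.tail.tail (r.eraseP (fun e => decide (e = inv a inp)))
    else
      match t with
      | [] => []
      | .inv a inp :: ts =>
          if h1 : h'.head? = some (inv a inp) ∧ ∃ out, res a out ∈ (inv a inp :: ts) then
            -- (T1)
            inv a inp :: effO a h1.2.choose :: res a h1.2.choose ::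
              trans ts h'.tail.tail r
          else
            -- (T2)
            trans ts h' (r ++ [inv a inp])
      | .res _ _ :: ts => trans ts h' r        -- (T3)
      | .effO _ _ :: ts => trans ts h' r       -- (T3)
      | .step s p :: ts => step s p :: trans ts h' r   -- (T4)
      | .effS s p :: ts => effS s p :: trans ts h' r   -- (T4)
  termination_by t h' r => t.length + h'.length
  decreasing_by
    · obtain ⟨a, inp, out, hh, -, -⟩ := h5
      have hne : h' ≠ [] := by intro hcon; subst hcon; simp at hh
      have h0 : 0 < h'.length := by cases h' with | nil => exact absurd rfl hne | cons _ _ => simp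
      simp_wf
      omega
    all_goals simp_wf
    all_goals omega

/-- Atomic-style traces: blocks `[inv a in, eff a out, res a out]` interleaved with
program events, each operation appearing in exactly one block. -/
inductive AtomicStyle : List (Event T PS Op Val) → Prop
  | nil : AtomicStyle []
  | prog {e : Event T PS Op Val} {t : List (Event T PS Op Val)} :
      IsProgEvent e → AtomicStyle t → AtomicStyle (e :: t)
  | block {a : Op} {inp out : Val} {t : List (Event T PS Op Val)} :
      (∀ v : Val, inv a v ∉ t ∧ res a v ∉ t ∧ effO a v ∉ t) →
      AtomicStyle t →
      AtomicStyle (inv a inp :: effO a out :: res a out :: t)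

end Event

namespace Event

variable {T PS Op Val : Type}

theorem comp_sublist (t : List (Event T PS Op Val)) : (comp t).Sublist t := by
  induction t with
  | nil => rw [comp]
  | cons e rest ih =>
    rw [comp]
    split
    · exact ih.trans (List.sublist_cons_self _ _)
    · exact ih.cons_cons e

theorem precedes.of_sublist {l l' : List (Event T PS Op Val)} {a b : Event T PS Op Val}
    (hp : precedes l a b) (h : l.Sublist l') : precedes l' a b := by
  obtain ⟨f, hf⟩ := List.sublist_iff_exists_orderEmbedding_getElem?_eq.mp h
  obtain ⟨i, j, hij, ha, hb⟩ := hp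
  exact ⟨f i, f j, f.strictMono hij, by rw [← hf, ha], by rw [← hf, hb]⟩

theorem precedes.of_append_of_not_mem {l r : List (Event T PS Op Val)} {a b : Event T PS Op Val}
    (hp : precedes (l ++ r) a b) (hb : b ∉ r) : precedes l a b := by
  obtain ⟨i, j, hij, hai, hbj⟩ := hp
  have hjl : j < l.length := by
    by_contra! hge
    rw [List.getElem?_append_right hge] at hbj
    exact hb (List.mem_of_getElem? hbj)
  refine ⟨i, j, hij, ?_, ?_⟩
  · rwa [← List.getElem?_append_left (hij.trans hjl)]
  · rwa [← List.getElem?_append_left hjl]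

theorem OpOrd.of_comp {u : List (Event T PS Op Val)} {e e' : Event T PS Op Val}
    (h : OpOrd (comp u) e e') : OpOrd u e e' :=
  ⟨h.1, h.2.1, h.2.2.of_sublist (comp_sublist u)⟩

theorem OpOrd.of_append_responses {l r : List (Event T PS Op Val)} {e e' : Event T PS Op Val}
    (hr : ∀ x ∈ r, ∃ c v, x = res c v) (h : OpOrd (l ++ r) e e') : OpOrd l e e' := by
  obtain ⟨he, ⟨d, w, rfl⟩, hp⟩ := h
  refine ⟨he, ⟨d, w, rfl⟩, hp.of_append_of_not_mem fun hmem => ?_⟩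
  obtain ⟨c, v, hcv⟩ := hr _ hmem
  cases hcv

end Event

theorem stmt10_general {T PS Op Val : Type}
    (t : List (Event T PS Op Val)) :
    ∀ tplus ∈ Event.ext t, ∀ e e' : Event T PS Op Val,
      Event.OpOrd (Event.comp tplus) e e' → Event.OpOrd t e e' := by
  rintro tplus ⟨tr, rfl, htr, -⟩ e e' h
  exact h.of_comp.of_append_responses htr

/-- Lemma 4: For any trace `t` and any completion of it, the
operation order of the completion is contained in that of `t`: for all
`tplus ∈ ext t`, `⪯_{comp tplus} ⊆ ⪯_t`. -/
theorem stmt10 {T PS Op Val : Type}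
    (t : List (Event T PS Op Val)) (hnd : t.Nodup) :
    ∀ tplus ∈ Event.ext t, ∀ e e' : Event T PS Op Val,
      Event.OpOrd (Event.comp tplus) e e' → Event.OpOrd t e e' :=
  stmt10_general t
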